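/- Let M ⊂ ℝ² be an open bounded set, let φ : M → M be a C¹ diffeomorphism of M onto itself, let q : M → ℝ³ be a C¹ map that is regular at every point of M, let u, v : M → ℝ³ be C¹ vector fields, and let α > 0. Assume that the integrand defining ⟨u, v⟩_q (and the corresponding integrand for the reparametrized data) is Lebesgue integrable on M. Then the H¹-type inner metric is invariant under reparametrization: ⟨u∘φ, v∘φ⟩_{q∘φ} = ⟨u, v⟩_q. -/

import Mathlib

/-!
If `J` is the Jacobian matrix of `φ` at `x`, the chain rule turns the first fundamental form
`g` into `Jᵀ g J` and the gradient rows `∇uᵏ` into `∇uᵏ J`. Since `J` is invertible (`ψ` is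
a differentiable inverse), the pairing `∇uᵏ g⁻¹ (∇vᵏ)ᵀ` is unchanged, while `√det g` picks up
the factor `|det J|`. So the reparametrized integrand is `|det Dφ|` times the original one
composed with `φ`, and the change of variables formula for the bijection `φ : M → M` gives
the equality of the integrals.
-/

open Matrix

/-- The `i`-th partial derivative of a map `q : ℝ² → ℝ³` at `x`. -/
noncomputable def partialDeriv (q : (Fin 2 → ℝ) → Fin 3 → ℝ) (x : Fin 2 → ℝ) (i : Fin 2) :
    Fin 3 → ℝ :=
  fderiv ℝ q x (Pi.single i 1)

/-- The `i`-th partial derivative of a scalar function `u : ℝ² → ℝ` at `x`. -/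
noncomputable def partialDerivS (u : (Fin 2 → ℝ) → ℝ) (x : Fin 2 → ℝ) (i : Fin 2) : ℝ :=
  fderiv ℝ u x (Pi.single i 1)

/-- The first fundamental form matrix `g(q)(x)` with entries
`g_{ij}(x) = ⟨∂ᵢq(x), ∂ⱼq(x)⟩` (Euclidean inner product on ℝ³). -/
noncomputable def firstFF (q : (Fin 2 → ℝ) → Fin 3 → ℝ) (x : Fin 2 → ℝ) :
    Matrix (Fin 2) (Fin 2) ℝ :=
  Matrix.of fun i j => partialDeriv q x i ⬝ᵥ partialDeriv q x j

/-- The volume density `vol(g)(x) = √(det g(q)(x))`. -/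
noncomputable def volDensity (q : (Fin 2 → ℝ) → Fin 3 → ℝ) (x : Fin 2 → ℝ) : ℝ :=
  Real.sqrt (firstFF q x).det

/-- The integrand of the `H¹`-type inner metric:
`Σₖ ( uᵏ(x) vᵏ(x) + α² Σᵢⱼ g^{ij}(x) ∂ᵢuᵏ(x) ∂ⱼvᵏ(x) ) · vol(g)(x)`. -/
noncomputable def innerMetricIntegrand (α : ℝ) (q u v : (Fin 2 → ℝ) → Fin 3 → ℝ)
    (x : Fin 2 → ℝ) : ℝ :=
  (∑ k : Fin 3, (u x k * v x k +
      α ^ 2 * ∑ i : Fin 2, ∑ j : Fin 2, (firstFF q x)⁻¹ i j *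
        partialDerivS (fun y => u y k) x i * partialDerivS (fun y => v y k) x j)) *
    volDensity q x

/-- The `H¹`-type inner metric `⟨u, v⟩_q` on vector fields along the surface `q`,
integrated over the parameter domain `M`. -/
noncomputable def innerMetric (M : Set (Fin 2 → ℝ)) (α : ℝ)
    (q u v : (Fin 2 → ℝ) → Fin 3 → ℝ) : ℝ :=
  ∫ x in M, innerMetricIntegrand α q u v x

section Matrix

variable {n R : Type*} [Fintype n] [CommRing R]

theorem sum_sum_mul_mul_eq_dotProduct_mulVec (B : Matrix n n R) (s t : n → R) :
    ∑ i, ∑ j, B i j * s i * t j = s ⬝ᵥ (B *ᵥ t) := by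
  simp only [dotProduct, mulVec, Finset.mul_sum]
  exact Finset.sum_congr rfl fun i _ => Finset.sum_congr rfl fun j _ => by ring

theorem vecMul_dotProduct_inv_mulVec_vecMul [DecidableEq n] (G J : Matrix n n R)
    (hJ : IsUnit J.det) (a b : n → R) :
    (a ᵥ* J) ⬝ᵥ ((Jᵀ * G * J)⁻¹ *ᵥ (b ᵥ* J)) = a ⬝ᵥ (G⁻¹ *ᵥ b) := by
  have hJT : IsUnit Jᵀ.det := by rwa [det_transpose]
  rw [Matrix.mul_inv_rev, Matrix.mul_inv_rev, ← mulVec_transpose J b, mulVec_mulVec,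
    Matrix.mul_assoc, Matrix.mul_assoc, nonsing_inv_mul _ hJT, Matrix.mul_one,
    dotProduct_mulVec, vecMul_vecMul, ← Matrix.mul_assoc, mul_nonsing_inv _ hJ, Matrix.one_mul,
    ← dotProduct_mulVec]

end Matrix

section Jacobian

variable {ι κ ν : Type*} [Fintype ι] [DecidableEq ι]

noncomputable def jacobian (f : (ι → ℝ) → κ → ℝ) (x : ι → ℝ) : Matrix κ ι ℝ :=
  LinearMap.toMatrix' (fderiv ℝ f x : (ι → ℝ) →ₗ[ℝ] κ → ℝ)

theorem jacobian_apply (f : (ι → ℝ) → κ → ℝ) (x : ι → ℝ) (k : κ) (i : ι) :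
    jacobian f x k i = fderiv ℝ f x (Pi.single i 1) k :=
  LinearMap.toMatrix'_apply _ _ _

theorem det_jacobian (φ : (ι → ℝ) → ι → ℝ) (x : ι → ℝ) :
    (jacobian φ x).det = (fderiv ℝ φ x).det :=
  LinearMap.det_toMatrix' _

theorem jacobian_comp [Fintype κ] [DecidableEq κ] [Fintype ν] {f : (κ → ℝ) → ν → ℝ}
    {φ : (ι → ℝ) → κ → ℝ} {x : ι → ℝ}
    (hf : DifferentiableAt ℝ f (φ x)) (hφ : DifferentiableAt ℝ φ x) :
    jacobian (f ∘ φ) x = jacobian f (φ x) * jacobian φ x := by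
  rw [jacobian, fderiv_comp x hf hφ]
  exact LinearMap.toMatrix'_comp _ _

theorem isUnit_det_jacobian_of_leftInverse {φ ψ : (ι → ℝ) → ι → ℝ} {x : ι → ℝ}
    (hψ : DifferentiableAt ℝ ψ (φ x)) (hφ : DifferentiableAt ℝ φ x)
    (hψφ : ψ ∘ φ =ᶠ[nhds x] id) :
    IsUnit (jacobian φ x).det := by
  refine isUnit_det_of_left_inverse (B := jacobian ψ (φ x)) ?_
  rw [← jacobian_comp hψ hφ, jacobian, hψφ.fderiv_eq, fderiv_id]
  exact LinearMap.toMatrix'_id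

end Jacobian

theorem partialDerivS_eq_jacobian {f : (Fin 2 → ℝ) → Fin 3 → ℝ} {x : Fin 2 → ℝ}
    (hf : DifferentiableAt ℝ f x) (k : Fin 3) (i : Fin 2) :
    partialDerivS (fun y => f y k) x i = jacobian f x k i := by
  rw [partialDerivS, fderiv_apply hf k, jacobian_apply]
  rfl

theorem firstFF_eq_transpose_mul_jacobian (q : (Fin 2 → ℝ) → Fin 3 → ℝ) (x : Fin 2 → ℝ) :
    firstFF q x = (jacobian q x)ᵀ * jacobian q x := by
  ext i j
  simp only [firstFF, partialDeriv, of_apply, mul_apply, transpose_apply, jacobian_apply,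
    dotProduct]

theorem firstFF_comp {q : (Fin 2 → ℝ) → Fin 3 → ℝ} {φ : (Fin 2 → ℝ) → Fin 2 → ℝ}
    {x : Fin 2 → ℝ} (hq : DifferentiableAt ℝ q (φ x)) (hφ : DifferentiableAt ℝ φ x) :
    firstFF (q ∘ φ) x = (jacobian φ x)ᵀ * firstFF q (φ x) * jacobian φ x := by
  simp only [firstFF_eq_transpose_mul_jacobian, jacobian_comp hq hφ, transpose_mul,
    Matrix.mul_assoc]

theorem volDensity_comp {q : (Fin 2 → ℝ) → Fin 3 → ℝ} {φ : (Fin 2 → ℝ) → Fin 2 → ℝ}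
    {x : Fin 2 → ℝ} (hq : DifferentiableAt ℝ q (φ x)) (hφ : DifferentiableAt ℝ φ x) :
    volDensity (q ∘ φ) x = |(fderiv ℝ φ x).det| * volDensity q (φ x) := by
  rw [volDensity, volDensity, firstFF_comp hq hφ, det_mul, det_mul, det_transpose,
    mul_comm _ (jacobian φ x).det, ← mul_assoc, ← sq, Real.sqrt_mul (sq_nonneg _),
    Real.sqrt_sq_eq_abs, det_jacobian]

theorem innerMetricIntegrand_eq_dotProduct {q u v : (Fin 2 → ℝ) → Fin 3 → ℝ} {x : Fin 2 → ℝ}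
    (α : ℝ) (hu : DifferentiableAt ℝ u x) (hv : DifferentiableAt ℝ v x) :
    innerMetricIntegrand α q u v x =
      (∑ k : Fin 3, (u x k * v x k +
        α ^ 2 * (jacobian u x k ⬝ᵥ ((firstFF q x)⁻¹ *ᵥ jacobian v x k)))) * volDensity q x := by
  simp only [innerMetricIntegrand, partialDerivS_eq_jacobian hu, partialDerivS_eq_jacobian hv,
    sum_sum_mul_mul_eq_dotProduct_mulVec]

theorem innerMetricIntegrand_comp {q u v : (Fin 2 → ℝ) → Fin 3 → ℝ}
    {φ : (Fin 2 → ℝ) → Fin 2 → ℝ} {x : Fin 2 → ℝ} (α : ℝ)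
    (hφ : DifferentiableAt ℝ φ x) (hq : DifferentiableAt ℝ q (φ x))
    (hu : DifferentiableAt ℝ u (φ x)) (hv : DifferentiableAt ℝ v (φ x))
    (hJ : IsUnit (jacobian φ x).det) :
    innerMetricIntegrand α (q ∘ φ) (u ∘ φ) (v ∘ φ) x =
      |(fderiv ℝ φ x).det| * innerMetricIntegrand α q u v (φ x) := by
  rw [innerMetricIntegrand_eq_dotProduct α (hu.comp x hφ) (hv.comp x hφ),
    innerMetricIntegrand_eq_dotProduct α hu hv, volDensity_comp hq hφ, firstFF_comp hq hφ,
    jacobian_comp hu hφ, jacobian_comp hv hφ]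
  simp only [mul_apply_eq_vecMul, vecMul_dotProduct_inv_mulVec_vecMul _ _ hJ,
    Function.comp_apply]
  ring

theorem innerMetric_reparam_invariant_general (M : Set (Fin 2 → ℝ))
    (hM : IsOpen M)
    (φ ψ : (Fin 2 → ℝ) → Fin 2 → ℝ) (q u v : (Fin 2 → ℝ) → Fin 3 → ℝ) (α : ℝ)
    (hφ : ContDiffOn ℝ 1 φ M) (hφbij : Set.BijOn φ M M)
    (hψ : ContDiffOn ℝ 1 ψ M) (hψinv : Set.InvOn ψ φ M M)
    (hq : ContDiffOn ℝ 1 q M)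
    (hu : ContDiffOn ℝ 1 u M) (hv : ContDiffOn ℝ 1 v M) :
    innerMetric M α (q ∘ φ) (u ∘ φ) (v ∘ φ) = innerMetric M α q u v := by
  have hdiff {k : ℕ} {f : (Fin 2 → ℝ) → Fin k → ℝ} (hf : ContDiffOn ℝ 1 f M) {x : Fin 2 → ℝ}
      (hx : x ∈ M) : DifferentiableAt ℝ f x :=
    (hf.differentiableOn one_ne_zero).differentiableAt (hM.mem_nhds hx)
  have hpointwise : ∀ x ∈ M, innerMetricIntegrand α (q ∘ φ) (u ∘ φ) (v ∘ φ) x =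
      |(fderiv ℝ φ x).det| • innerMetricIntegrand α q u v (φ x) := by
    intro x hx
    have hy := hφbij.mapsTo hx
    have hψφ : ψ ∘ φ =ᶠ[nhds x] id :=
      Filter.eventuallyEq_of_mem (hM.mem_nhds hx) fun z hz => hψinv.1 hz
    exact innerMetricIntegrand_comp α (hdiff hφ hx) (hdiff hq hy) (hdiff hu hy) (hdiff hv hy)
      (isUnit_det_jacobian_of_leftInverse (hdiff hψ hy) (hdiff hφ hx) hψφ)
  calc innerMetric M α (q ∘ φ) (u ∘ φ) (v ∘ φ)
      = ∫ x in M, |(fderiv ℝ φ x).det| • innerMetricIntegrand α q u v (φ x) :=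
        MeasureTheory.setIntegral_congr_fun hM.measurableSet hpointwise
    _ = ∫ y in φ '' M, innerMetricIntegrand α q u v y :=
        (MeasureTheory.integral_image_eq_integral_abs_det_fderiv_smul _ hM.measurableSet
          (fun x hx => (hdiff hφ hx).hasFDerivAt.hasFDerivWithinAt) hφbij.injOn _).symm
    _ = innerMetric M α q u v := by rw [hφbij.image_eq, innerMetric]

/-- let `M ⊂ ℝ²` be an open bounded set, `φ : M → M` a C¹
diffeomorphism of `M` onto itself, `q : M → ℝ³` a C¹ map regular at every point
of `M`, `u, v : M → ℝ³` C¹ vector fields, and `α > 0`. If the integrand defining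
`⟨u, v⟩_q` (and the corresponding integrand for the reparametrized data) is
Lebesgue integrable on `M`, then the `H¹`-type inner metric is invariant under
reparametrization: `⟨u∘φ, v∘φ⟩_{q∘φ} = ⟨u, v⟩_q`. -/
theorem innerMetric_reparam_invariant (M : Set (Fin 2 → ℝ))
    (hM : IsOpen M) (hMb : Bornology.IsBounded M)
    (φ ψ : (Fin 2 → ℝ) → Fin 2 → ℝ) (q u v : (Fin 2 → ℝ) → Fin 3 → ℝ) (α : ℝ)
    (hφ : ContDiffOn ℝ 1 φ M) (hφbij : Set.BijOn φ M M)
    (hψ : ContDiffOn ℝ 1 ψ M) (hψinv : Set.InvOn ψ φ M M)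
    (hq : ContDiffOn ℝ 1 q M)
    (hreg : ∀ x ∈ M, LinearIndependent ℝ (fun i : Fin 2 => partialDeriv q x i))
    (hu : ContDiffOn ℝ 1 u M) (hv : ContDiffOn ℝ 1 v M) (hα : 0 < α)
    (hint : MeasureTheory.IntegrableOn (innerMetricIntegrand α q u v) M)
    (hint' : MeasureTheory.IntegrableOn
      (innerMetricIntegrand α (q ∘ φ) (u ∘ φ) (v ∘ φ)) M) :
    innerMetric M α (q ∘ φ) (u ∘ φ) (v ∘ φ) = innerMetric M α q u v :=
  innerMetric_reparam_invariant_general M hM φ ψ q u v α hφ hφbij hψ hψinv hq hu hv
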